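/- arXiv:2305.00500 — 2 statements merged into one kernel-verified Lean document; each statement's English description precedes it below -/
import Mathlib

section
/- Let H be a Hilbert space over 𝕂 = ℝ or ℂ and let A ⊆ H × H be a dissipative relation. If the orthogonal complement of ran(1 − A) in H is not {0}, then there exists a dissipative relation B ⊆ H × H with A ⊆ B and A ≠ B. Moreover, if A is an operator (i.e. mul A = {0}), then B can be chosen to be an operator. -/
open Filter Topology

/-- A relation `A ⊆ H × H` is dissipative if `‖lx‖ ≤ ‖lx - y‖` for all `(x,y) ∈ A`
and all real `l > 0`. -/
def Dissipative {𝕜 H : Type*} [RCLike 𝕜] [NormedAddCommGroup H] [InnerProductSpace 𝕜 H]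
    (A : Submodule 𝕜 (H × H)) : Prop :=
  ∀ p ∈ A, ∀ l : ℝ, 0 < l → ‖(l : 𝕜) • p.1‖ ≤ ‖(l : 𝕜) • p.1 - p.2‖

/-!
If `v ≠ 0` is orthogonal to `ran(1 - A)`, adjoin the pair `(v, -v)` to `A`. For `(x, y) ∈ A` the
cross terms of `⟪x + c • v, y - c • v⟫` add up to `⟪c • v, x - y⟫ = 0`, so its real part is
`re ⟪x, y⟫ - ‖c • v‖ ^ 2 ≤ 0`. The same identity shows that `(0, y)` can only lie in the extension
if `c • v = 0`, i.e. if `(0, y) ∈ A`.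
-/

open scoped InnerProductSpace
open RCLike

section
variable {𝕜 H : Type*} [RCLike 𝕜] [NormedAddCommGroup H] [InnerProductSpace 𝕜 H]

lemma norm_ofReal_smul_sub_sq (l : ℝ) (x y : H) :
    ‖(l : 𝕜) • x - y‖ ^ 2 = ‖(l : 𝕜) • x‖ ^ 2 - 2 * l * re ⟪x, y⟫_𝕜 + ‖y‖ ^ 2 := by
  rw [@norm_sub_sq 𝕜, inner_smul_left, conj_ofReal, re_ofReal_mul, mul_assoc]

theorem dissipative_iff_re_inner_nonpos {A : Submodule 𝕜 (H × H)} :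
    Dissipative A ↔ ∀ p ∈ A, re ⟪p.1, p.2⟫_𝕜 ≤ 0 := by
  simp only [Dissipative, ← sq_le_sq₀ (norm_nonneg _) (norm_nonneg _), norm_ofReal_smul_sub_sq]
  refine forall₂_congr fun p _ => ⟨fun h => ?_, fun h l hl => by nlinarith [sq_nonneg ‖p.2‖]⟩
  by_contra! hpos
  have := h (‖p.2‖ ^ 2 / re ⟪p.1, p.2⟫_𝕜 + 1) (by positivity)
  field_simp at this
  nlinarith

lemma re_inner_add_sub (x y w : H) :
    re ⟪x + w, y - w⟫_𝕜 = re ⟪x, y⟫_𝕜 - re ⟪w, x - y⟫_𝕜 - ‖w‖ ^ 2 := by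
  simp only [inner_add_left, inner_sub_right, map_add, map_sub]
  rw [inner_re_symm x w, ← inner_self_eq_norm_sq (𝕜 := 𝕜)]
  ring

variable {A : Submodule 𝕜 (H × H)} {v : H}

lemma mem_sup_span_antidiag {p : H × H} :
    p ∈ A ⊔ 𝕜 ∙ (v, -v) ↔ ∃ q ∈ A, ∃ c : 𝕜, p = (q.1 + c • v, q.2 - c • v) := by
  simp only [Submodule.mem_sup, Submodule.mem_span_singleton]
  constructor
  · rintro ⟨q, hq, _, ⟨c, rfl⟩, rfl⟩
    exact ⟨q, hq, c, by ext <;> simp [sub_eq_add_neg]⟩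
  · rintro ⟨q, hq, c, rfl⟩
    exact ⟨q, hq, _, ⟨c, rfl⟩, by ext <;> simp [sub_eq_add_neg]⟩

lemma re_inner_add_smul_sub_smul (hv : ∀ p ∈ A, ⟪p.1 - p.2, v⟫_𝕜 = 0) {q : H × H} (hq : q ∈ A)
    (c : 𝕜) : re ⟪q.1 + c • v, q.2 - c • v⟫_𝕜 = re ⟪q.1, q.2⟫_𝕜 - ‖c • v‖ ^ 2 := by
  rw [re_inner_add_sub, inner_smul_left, inner_eq_zero_symm.1 (hv q hq)]
  simp

theorem Dissipative.sup_span_antidiag (hA : Dissipative A) (hv : ∀ p ∈ A, ⟪p.1 - p.2, v⟫_𝕜 = 0) :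
    Dissipative (A ⊔ 𝕜 ∙ (v, -v)) := by
  rw [dissipative_iff_re_inner_nonpos] at hA ⊢
  intro p hp
  obtain ⟨q, hq, c, rfl⟩ := mem_sup_span_antidiag.1 hp
  rw [re_inner_add_smul_sub_smul hv hq]
  linarith [hA q hq, sq_nonneg ‖c • v‖]

lemma antidiag_notMem (hv0 : v ≠ 0) (hv : ∀ p ∈ A, ⟪p.1 - p.2, v⟫_𝕜 = 0) : (v, -v) ∉ A := by
  intro hmem
  have h := hv _ hmem
  rw [sub_neg_eq_add, inner_add_left, ← two_mul, mul_eq_zero, inner_self_eq_zero] at h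
  exact h.elim (two_ne_zero (α := 𝕜)) hv0

theorem Dissipative.eq_zero_of_mem_sup_span_antidiag (hA : Dissipative A)
    (hv : ∀ p ∈ A, ⟪p.1 - p.2, v⟫_𝕜 = 0) (hmul : ∀ y : H, ((0 : H), y) ∈ A → y = 0) {y : H}
    (hy : ((0 : H), y) ∈ A ⊔ 𝕜 ∙ (v, -v)) : y = 0 := by
  obtain ⟨q, hq, c, hqc⟩ := mem_sup_span_antidiag.1 hy
  obtain ⟨h0, rfl⟩ := Prod.mk.inj hqc
  have hre := re_inner_add_smul_sub_smul hv hq c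
  rw [← h0, inner_zero_left, map_zero] at hre
  have hcv : c • v = 0 := by
    have := dissipative_iff_re_inner_nonpos.1 hA q hq
    have : ‖c • v‖ ^ 2 ≤ 0 := by linarith
    exact norm_eq_zero.1 (by nlinarith [norm_nonneg (c • v)])
  rw [hcv, add_zero] at h0
  rw [hcv, sub_zero]
  exact hmul _ (h0 ▸ hq)

end

theorem stmt_13_general {𝕜 H : Type*} [RCLike 𝕜] [NormedAddCommGroup H] [InnerProductSpace 𝕜 H]
    (A : Submodule 𝕜 (H × H))
    (hdiss : Dissipative A)
    (hperp : ∃ v : H, v ≠ 0 ∧ ∀ p ∈ A, (inner 𝕜 (p.1 - p.2) v : 𝕜) = 0) :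
    ∃ B : Submodule 𝕜 (H × H), Dissipative B ∧ A < B ∧
      ((∀ y : H, ((0 : H), y) ∈ A → y = 0) → ∀ y : H, ((0 : H), y) ∈ B → y = 0) := by
  obtain ⟨v, hv0, hv⟩ := hperp
  exact ⟨A ⊔ 𝕜 ∙ (v, -v), hdiss.sup_span_antidiag hv,
    Submodule.lt_sup_iff_notMem.2 (antidiag_notMem hv0 hv),
    fun hmul _ hy => hdiss.eq_zero_of_mem_sup_span_antidiag hv hmul hy⟩

/-- If `A` is a dissipative relation on a Hilbert space `H` and the orthogonal complement
of `ran(1 - A) = {x - y : (x,y) ∈ A}` is not `{0}`, then `A` has a proper dissipative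
extension `B`; moreover if `A` is an operator then `B` can be chosen to be an operator. -/
theorem stmt_13 {𝕜 H : Type*} [RCLike 𝕜] [NormedAddCommGroup H] [InnerProductSpace 𝕜 H]
    [CompleteSpace H] (A : Submodule 𝕜 (H × H))
    (hdiss : Dissipative A)
    (hperp : ∃ v : H, v ≠ 0 ∧ ∀ p ∈ A, (inner 𝕜 (p.1 - p.2) v : 𝕜) = 0) :
    ∃ B : Submodule 𝕜 (H × H), Dissipative B ∧ A < B ∧
      ((∀ y : H, ((0 : H), y) ∈ A → y = 0) → ∀ y : H, ((0 : H), y) ∈ B → y = 0) :=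
  stmt_13_general A hdiss hperp
end

section
/- Let H be a Hilbert space over 𝕂 = ℝ or ℂ. A relation A ⊆ H × H is m-dissipative if and only if A is maximal dissipative, i.e. A is dissipative and whenever B ⊆ H × H is a dissipative relation with A ⊆ B, then A = B. -/
/-!
A dissipative relation `A` satisfies `Re ⟪x, y⟫ ≤ 0` on its graph. If `ran(l - A) = H`, any
dissipative extension `B` of `A` equals `A`: for `q ∈ B` pick `p ∈ A` with the same image under
`l - B`; then `q - p ∈ B` is mapped to `0`, and dissipativity forces `q = p`.

Conversely, a maximal dissipative `A` is closed (the closure is still dissipative), and on its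
graph `‖x‖ ≤ ‖x - y‖`, so `ran(1 - A)` is closed. If `z ⊥ ran(1 - A)`, adjoining `(z, -z)` keeps
the relation dissipative, so by maximality `(z, -z) ∈ A`, whence `2z ∈ ran(1 - A)` and `z = 0`.
-/

open Filter Topology
open RCLike

section

variable {𝕜 H : Type*} [RCLike 𝕜] [NormedAddCommGroup H] [InnerProductSpace 𝕜 H]

local notation "⟪" x ", " y "⟫" => @inner 𝕜 _ _ x y

theorem forall_pos_norm_smul_le_iff_re_inner_nonpos (x y : H) :
    (∀ l : ℝ, 0 < l → ‖(l : 𝕜) • x‖ ≤ ‖(l : 𝕜) • x - y‖) ↔ re ⟪x, y⟫ ≤ 0 := by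
  have expand : ∀ l : ℝ, ‖(l : 𝕜) • x - y‖ ^ 2
      = ‖(l : 𝕜) • x‖ ^ 2 - 2 * (l * re ⟪x, y⟫) + ‖y‖ ^ 2 := by
    intro l
    rw [norm_sub_sq (𝕜 := 𝕜), inner_smul_left, conj_ofReal, re_ofReal_mul]
  simp_rw [← sq_le_sq₀ (norm_nonneg _) (norm_nonneg _), expand]
  constructor
  · intro h
    by_contra! hpos
    -- the inequality fails at `l = (‖y‖² + 1) / (2 Re ⟪x, y⟫)`
    set l := (‖y‖ ^ 2 + 1) / (2 * re ⟪x, y⟫) with hl_def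
    have hl : 2 * (l * re ⟪x, y⟫) = ‖y‖ ^ 2 + 1 := by
      rw [hl_def]; field_simp
    linarith [h l (by positivity)]
  · intro h l hl
    nlinarith [sq_nonneg ‖y‖]

theorem re_inner_add_sub_eq_of_inner_sub_eq_zero (x y w : H) (h : ⟪w, x - y⟫ = 0) :
    re ⟪x + w, y - w⟫ = re ⟪x, y⟫ - ‖w‖ ^ 2 := by
  rw [inner_sub_right, sub_eq_zero] at h
  rw [inner_add_left, inner_sub_right, inner_sub_right, map_add, map_sub, map_sub,
    inner_re_symm x w, h, inner_self_eq_norm_sq]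
  ring

namespace Dissipative

theorem iff_re_inner_nonpos (A : Submodule 𝕜 (H × H)) :
    Dissipative A ↔ ∀ p ∈ A, re ⟪p.1, p.2⟫ ≤ 0 :=
  forall₂_congr fun p _ => forall_pos_norm_smul_le_iff_re_inner_nonpos p.1 p.2

theorem topologicalClosure {A : Submodule 𝕜 (H × H)} (hA : Dissipative A) :
    Dissipative A.topologicalClosure := by
  rw [iff_re_inner_nonpos] at hA ⊢
  have hclosed : IsClosed {p : H × H | re ⟪p.1, p.2⟫ ≤ 0} :=
    isClosed_le (continuous_re.comp (continuous_fst.inner continuous_snd)) continuous_const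
  intro p hp
  rw [← SetLike.mem_coe, Submodule.topologicalClosure_coe] at hp
  exact closure_minimal hA hclosed hp

theorem norm_fst_le {A : Submodule 𝕜 (H × H)} (hA : Dissipative A) {p : H × H} (hp : p ∈ A) :
    ‖p.1‖ ≤ ‖p.1 - p.2‖ := by
  simpa using hA p hp 1 one_pos

theorem eq_zero_of_smul_fst_eq_snd {A : Submodule 𝕜 (H × H)} (hA : Dissipative A)
    {p : H × H} (hp : p ∈ A) {l : ℝ} (hl : 0 < l) (h : (l : 𝕜) • p.1 = p.2) : p = 0 := by
  have hfst : (l : 𝕜) • p.1 = 0 := by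
    simpa [h] using hA p hp l hl
  have hl' : (l : 𝕜) ≠ 0 := ofReal_ne_zero.mpr hl.ne'
  exact Prod.ext (smul_eq_zero.mp hfst |>.resolve_left hl') (h ▸ hfst)

theorem eq_of_le_of_forall_exists {A B : Submodule 𝕜 (H × H)} {l : ℝ} (hl : 0 < l)
    (hsurj : ∀ v : H, ∃ p ∈ A, v = (l : 𝕜) • p.1 - p.2) (hB : Dissipative B) (hAB : A ≤ B) :
    A = B := by
  refine le_antisymm hAB fun q hq => ?_
  obtain ⟨p, hpA, hpq⟩ := hsurj ((l : 𝕜) • q.1 - q.2)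
  have hqp : q - p = 0 := by
    refine hB.eq_zero_of_smul_fst_eq_snd (B.sub_mem hq (hAB hpA)) hl ?_
    simpa only [Prod.fst_sub, Prod.snd_sub, smul_sub] using sub_eq_sub_iff_sub_eq_sub.mp hpq
  rwa [sub_eq_zero.mp hqp]

theorem isClosed_map_fst_sub_snd [CompleteSpace H] {A : Submodule 𝕜 (H × H)}
    (hA : Dissipative A) (hclosed : IsClosed (A : Set (H × H))) :
    IsClosed (A.map (LinearMap.fst 𝕜 H H - LinearMap.snd 𝕜 H H) : Set H) := by
  have : CompleteSpace A := hclosed.completeSpace_coe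
  let g : A →L[𝕜] H :=
    (ContinuousLinearMap.fst 𝕜 H H - ContinuousLinearMap.snd 𝕜 H H).comp A.subtypeL
  have hg : AntilipschitzWith 2 g := g.antilipschitz_of_bound fun p => by
    have hfst := hA.norm_fst_le p.2
    have hsnd : ‖(p : H × H).2‖ ≤ ‖(p : H × H).1‖ + ‖(p : H × H).1 - (p : H × H).2‖ := by
      simpa [norm_sub_rev] using norm_le_insert' (p : H × H).2 (p : H × H).1
    change ‖(p : H × H)‖ ≤ 2 * ‖(p : H × H).1 - (p : H × H).2‖
    rw [norm_prod_le_iff]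
    constructor <;> linarith [norm_nonneg ((p : H × H).1 - (p : H × H).2)]
  have hrange : (A.map (LinearMap.fst 𝕜 H H - LinearMap.snd 𝕜 H H) : Set H) = Set.range g := by
    ext v
    simp [g]
  rw [hrange]
  exact hg.isClosed_range g.uniformContinuous

theorem sup_span_antidiagonal {A : Submodule 𝕜 (H × H)} (hA : Dissipative A) {z : H}
    (hz : z ∈ (A.map (LinearMap.fst 𝕜 H H - LinearMap.snd 𝕜 H H))ᗮ) :
    Dissipative (A ⊔ 𝕜 ∙ (z, -z)) := by
  rw [iff_re_inner_nonpos] at hA ⊢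
  intro q hq
  obtain ⟨a, ha, b, hb, rfl⟩ := Submodule.mem_sup.mp hq
  obtain ⟨c, rfl⟩ := Submodule.mem_span_singleton.mp hb
  have horth : ⟪c • z, a.1 - a.2⟫ = 0 :=
    Submodule.inner_left_of_mem_orthogonal (Submodule.mem_map.mpr ⟨a, ha, rfl⟩)
      (Submodule.smul_mem _ c hz)
  calc re ⟪(a + c • (z, -z)).1, (a + c • (z, -z)).2⟫
      = re ⟪a.1 + c • z, a.2 - c • z⟫ := by simp [sub_eq_add_neg]
    _ = re ⟪a.1, a.2⟫ - ‖c • z‖ ^ 2 := re_inner_add_sub_eq_of_inner_sub_eq_zero _ _ _ horth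
    _ ≤ 0 := by nlinarith [hA a ha, sq_nonneg ‖c • z‖]

theorem map_fst_sub_snd_eq_top [CompleteSpace H] {A : Submodule 𝕜 (H × H)}
    (hA : Dissipative A) (hmax : ∀ B : Submodule 𝕜 (H × H), Dissipative B → A ≤ B → A = B) :
    A.map (LinearMap.fst 𝕜 H H - LinearMap.snd 𝕜 H H) = ⊤ := by
  set R := A.map (LinearMap.fst 𝕜 H H - LinearMap.snd 𝕜 H H)
  have hclosed : IsClosed (A : Set (H × H)) := by
    rw [hmax _ hA.topologicalClosure A.le_topologicalClosure]
    exact A.isClosed_topologicalClosure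
  have : CompleteSpace R := (hA.isClosed_map_fst_sub_snd hclosed).completeSpace_coe
  rw [← Submodule.orthogonal_eq_bot_iff, Submodule.eq_bot_iff]
  intro z hz
  have hzA : (z, -z) ∈ A := by
    rw [hmax _ (hA.sup_span_antidiagonal hz) le_sup_left]
    exact Submodule.mem_sup_right (Submodule.mem_span_singleton_self _)
  have hzR : z ∈ R := by
    have h2z : (2 : 𝕜) • z ∈ R := Submodule.mem_map.mpr ⟨(z, -z), hzA, by simp [two_smul]⟩
    exact (R.smul_mem_iff two_ne_zero).mp h2z
  exact R.inf_orthogonal_eq_bot.le (Submodule.mem_inf.mpr ⟨hzR, hz⟩)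

end Dissipative

end

/-- On a Hilbert space, a relation is m-dissipative (dissipative with `ran(l - A) = H`
for some `l > 0`) iff it is maximal dissipative (dissipative with no proper dissipative
extension). -/
theorem stmt_14 {𝕜 H : Type*} [RCLike 𝕜] [NormedAddCommGroup H] [InnerProductSpace 𝕜 H]
    [CompleteSpace H] (A : Submodule 𝕜 (H × H)) :
    (Dissipative A ∧ ∃ l : ℝ, 0 < l ∧ ∀ v : H, ∃ p ∈ A, v = (l : 𝕜) • p.1 - p.2) ↔
      (Dissipative A ∧ ∀ B : Submodule 𝕜 (H × H), Dissipative B → A ≤ B → A = B) := by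
  constructor
  · rintro ⟨hA, l, hl, hsurj⟩
    exact ⟨hA, fun B hB hAB => Dissipative.eq_of_le_of_forall_exists hl hsurj hB hAB⟩
  · rintro ⟨hA, hmax⟩
    refine ⟨hA, 1, one_pos, fun v => ?_⟩
    obtain ⟨p, hp, hpv⟩ := (hA.map_fst_sub_snd_eq_top hmax).ge (Submodule.mem_top (x := v))
    exact ⟨p, hp, by simpa using hpv.symm⟩
end
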